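/- With notation as above (f(x) = Σ_{k≥1} a_{x_k}/(k·2^k), (a_n) equilateral with ‖a_n - a_m‖ = 1 for n ≠ m), for all x ≠ x' in E with k_0 = χ(x,x'), one has 2^{-(k_0+2)} · k_0^{-2} ≤ ‖f(x) - f(x')‖ ≤ 2^{-k_0+1}. -/

import Mathlib

/-!
Indices start at `0`, so `f x - f x' = ∑ₖ wₖ • (a (x k) - a (x' k))` with
`wₖ = ((k + 1) 2^(k+1))⁻¹`, and `χ(x, x') = m + 1` for the first index `m` where `x`, `x'`
differ. The terms vanish below `m`, the `m`-th term has norm exactly `wₘ` because `(a n)` is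
equilateral, and every later term has norm at most `wₖ`. Since `w_{k+n} ≤ (n + 1)⁻¹ 2^{-(n+k+1)}`,
the tail beyond `m` is at most `(m + 2)⁻¹ 2^{-(m+1)}`, leaving the lower bound
`wₘ - (m + 2)⁻¹ 2^{-(m+1)} = 2^{-(m+1)} / ((m + 1)(m + 2))`, while the whole series from `m` on is
at most `2^{-m}`.
-/

/-- The minimal index (counting from 1) at which two sequences of positive integers differ. -/
noncomputable def chi (x y : ℕ → ℕ+) : ℕ := sInf {n | x n ≠ y n} + 1

theorem exists_chi_eq_succ {x y : ℕ → ℕ+} (h : x ≠ y) :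
    ∃ m, chi x y = m + 1 ∧ x m ≠ y m ∧ ∀ k < m, x k = y k :=
  ⟨_, rfl, Nat.sInf_mem (Function.ne_iff.1 h), fun _ hk => not_not.1 (Nat.notMem_of_lt_sInf hk)⟩

section Equilateral

variable {ι E : Type*} [SeminormedAddCommGroup E] {a : ι → E}

theorem norm_sub_le_one_of_equilateral (ha : ∀ i j, i ≠ j → ‖a i - a j‖ = 1) (i j : ι) :
    ‖a i - a j‖ ≤ 1 := by
  rcases eq_or_ne i j with rfl | hij
  · simp
  · exact (ha i j hij).le

theorem norm_le_norm_add_one_of_equilateral (ha : ∀ i j, i ≠ j → ‖a i - a j‖ = 1) (i j : ι) :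
    ‖a i‖ ≤ ‖a j‖ + 1 :=
  (norm_le_norm_add_norm_sub' (a i) (a j)).trans
    (add_le_add_right (norm_sub_le_one_of_equilateral ha i j) _)

end Equilateral

theorem tsum_eq_tsum_nat_add_of_eq_zero {G : Type*} [AddCommGroup G] [TopologicalSpace G]
    [IsTopologicalAddGroup G] [T2Space G] {g : ℕ → G} (hg : Summable g) {m : ℕ}
    (hzero : ∀ k < m, g k = 0) : ∑' k, g k = ∑' k, g (k + m) := by
  rw [← hg.sum_add_tsum_nat_add m,
    Finset.sum_eq_zero fun k hk => hzero k (Finset.mem_range.1 hk), zero_add]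

section FirstNonzeroTerm

variable {E : Type*} [NormedAddCommGroup E] [CompleteSpace E] {g : ℕ → E} {c : ℕ → ℝ} {m : ℕ}

theorem norm_tsum_le_tsum_nat_add (hc : Summable c) (hgc : ∀ k, ‖g k‖ ≤ c k)
    (hzero : ∀ k < m, g k = 0) : ‖∑' k, g k‖ ≤ ∑' k, c (k + m) := by
  rw [tsum_eq_tsum_nat_add_of_eq_zero (hc.of_norm_bounded hgc) hzero]
  exact tsum_of_norm_bounded ((summable_nat_add_iff m).2 hc).hasSum fun k => hgc (k + m)

theorem norm_sub_tsum_nat_add_le_norm_tsum (hc : Summable c) (hgc : ∀ k, ‖g k‖ ≤ c k)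
    (hzero : ∀ k < m, g k = 0) : ‖g m‖ - ∑' k, c (k + (m + 1)) ≤ ‖∑' k, g k‖ := by
  have hg : Summable g := hc.of_norm_bounded hgc
  have hsplit : ∑' k, g k = g m + ∑' k, g (k + (m + 1)) := by
    rw [tsum_eq_tsum_nat_add_of_eq_zero hg hzero, ((summable_nat_add_iff m).2 hg).tsum_eq_zero_add]
    simp only [zero_add, add_right_comm _ 1 m, add_assoc]
  have htail : ‖∑' k, g (k + (m + 1))‖ ≤ ∑' k, c (k + (m + 1)) :=
    tsum_of_norm_bounded ((summable_nat_add_iff (m + 1)).2 hc).hasSum fun k => hgc _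
  have := norm_le_norm_add_norm_sub' (g m) (∑' k, g k)
  rw [hsplit, sub_add_cancel_left, norm_neg] at this
  rw [hsplit]
  linarith

end FirstNonzeroTerm

noncomputable def weight (k : ℕ) : ℝ := (((k : ℝ) + 1) * 2 ^ (k + 1))⁻¹

theorem weight_nonneg (k : ℕ) : 0 ≤ weight k := by
  unfold weight
  positivity

theorem weight_nat_add_le (n k : ℕ) :
    weight (k + n) ≤ ((n : ℝ) + 1)⁻¹ * (1 / 2) ^ (n + 1) * (1 / 2) ^ k := by
  have hrhs : ((n : ℝ) + 1)⁻¹ * (1 / 2) ^ (n + 1) * (1 / 2) ^ k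
      = (((n : ℝ) + 1) * 2 ^ (k + n + 1))⁻¹ := by
    rw [one_div, inv_pow, inv_pow, mul_inv, mul_assoc, ← mul_inv, ← pow_add, add_comm (n + 1) k,
      add_assoc]
  rw [hrhs, weight]
  gcongr
  linarith

theorem summable_weight : Summable weight :=
  .of_nonneg_of_le weight_nonneg (fun k => by simpa using weight_nat_add_le 0 k)
    (summable_geometric_two.mul_left _)

theorem tsum_weight_nat_add_le (n : ℕ) :
    ∑' k, weight (k + n) ≤ ((n : ℝ) + 1)⁻¹ * (1 / 2) ^ n := by
  refine hasSum_le (weight_nat_add_le n) ((summable_nat_add_iff n).2 summable_weight).hasSum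
    (hasSum_geometric_two.mul_left _) |>.trans_eq ?_
  ring

theorem norm_weight_smul_le {E : Type*} [SeminormedAddCommGroup E] [NormedSpace ℝ E] {v : E}
    {B : ℝ} (hv : ‖v‖ ≤ B) (k : ℕ) : ‖weight k • v‖ ≤ weight k * B := by
  rw [norm_smul, Real.norm_of_nonneg (weight_nonneg k)]
  exact mul_le_mul_of_nonneg_left hv (weight_nonneg k)

theorem summable_weight_smul {E : Type*} [NormedAddCommGroup E] [NormedSpace ℝ E] [CompleteSpace E]
    {v : ℕ → E} {B : ℝ} (hv : ∀ k, ‖v k‖ ≤ B) : Summable fun k => weight k • v k :=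
  (summable_weight.mul_right B).of_norm_bounded fun k => norm_weight_smul_le (hv k) k

theorem two_zpow_div_sq_le_weight_sub (m : ℕ) :
    (2 : ℝ) ^ (-((m + 1 : ℕ) : ℤ) - 2) / ((m + 1 : ℕ) : ℝ) ^ 2
      ≤ weight m - (((m + 1 : ℕ) : ℝ) + 1)⁻¹ * (1 / 2) ^ (m + 1) := by
  rw [show -((m + 1 : ℕ) : ℤ) - 2 = -((m + 3 : ℕ) : ℤ) by push_cast; ring, zpow_neg, zpow_natCast,
    weight]
  push_cast
  rw [show m + 3 = (m + 1) + 2 by rfl, pow_add, one_div, inv_pow]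
  have hq : (0 : ℝ) < 2 ^ (m + 1) := by positivity
  have hm : (0 : ℝ) ≤ m := m.cast_nonneg
  field_simp
  nlinarith [mul_pos hq (by positivity : (0 : ℝ) < ((m : ℝ) + 1) * ((m : ℝ) + 2))]

theorem stmt6 {A : Type*} [NormedAddCommGroup A] [NormedSpace ℝ A] [CompleteSpace A]
    (a : ℕ+ → A) (ha : ∀ n m : ℕ+, n ≠ m → ‖a n - a m‖ = 1)
    (f : (ℕ → ℕ+) → A)
    (hf : ∀ x : ℕ → ℕ+, f x = ∑' k : ℕ, (((k : ℝ) + 1) * 2 ^ (k + 1))⁻¹ • a (x k))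
    (x x' : ℕ → ℕ+) (hxx' : x ≠ x') (k₀ : ℕ) (hk₀ : k₀ = chi x x') :
    (2 : ℝ) ^ (-(k₀ : ℤ) - 2) / (k₀ : ℝ) ^ 2 ≤ ‖f x - f x'‖ ∧
    ‖f x - f x'‖ ≤ (2 : ℝ) ^ (1 - (k₀ : ℤ)) := by
  obtain ⟨m, hchi, hxm, hagree⟩ := exists_chi_eq_succ hxx'
  have hf' : ∀ y, f y = ∑' k, weight k • a (y k) := hf
  have hsummable (y : ℕ → ℕ+) : Summable fun k => weight k • a (y k) :=
    summable_weight_smul fun k => norm_le_norm_add_one_of_equilateral ha (y k) 1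
  set g : ℕ → A := fun k => weight k • (a (x k) - a (x' k))
  have hdiff : f x - f x' = ∑' k, g k := by
    simp only [hf', g, smul_sub, (hsummable x).tsum_sub (hsummable x')]
  have hg_le (k : ℕ) : ‖g k‖ ≤ weight k :=
    (norm_weight_smul_le (norm_sub_le_one_of_equilateral ha _ _) k).trans_eq (mul_one _)
  have hg_zero : ∀ k < m, g k = 0 := fun k hk => by simp [g, hagree k hk]
  have hg_m : ‖g m‖ = weight m := by
    rw [norm_smul, ha _ _ hxm, mul_one, Real.norm_of_nonneg (weight_nonneg m)]
  subst hk₀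
  rw [hchi, hdiff]
  constructor
  · calc _ ≤ weight m - (((m + 1 : ℕ) : ℝ) + 1)⁻¹ * (1 / 2) ^ (m + 1) :=
          two_zpow_div_sq_le_weight_sub m
      _ ≤ ‖g m‖ - ∑' k, weight (k + (m + 1)) := by
          rw [hg_m]
          exact sub_le_sub_left (tsum_weight_nat_add_le (m + 1)) _
      _ ≤ _ := norm_sub_tsum_nat_add_le_norm_tsum summable_weight hg_le hg_zero
  · calc _ ≤ ∑' k, weight (k + m) := norm_tsum_le_tsum_nat_add summable_weight hg_le hg_zero
      _ ≤ ((m : ℝ) + 1)⁻¹ * (1 / 2) ^ m := tsum_weight_nat_add_le m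
      _ ≤ (1 / 2) ^ m := mul_le_of_le_one_left (by positivity) (inv_le_one_of_one_le₀ (by simp))
      _ = _ := by
          rw [one_div, inv_pow, ← zpow_natCast, ← zpow_neg]
          push_cast
          ring_nf
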